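/- Let x₁, …, xₙ be a basis of ℝⁿ which is α-reduced for some 1/4 < α < 1, and let L be the lattice it generates, with determinant d(L). Then ‖x₁‖ ≤ (4/(4α − 1))^{(n−1)/4} · d(L)^{1/n}. -/

import Mathlib

/-!
The Gram–Schmidt vectors `x*ⱼ` are pairwise orthogonal, so the Lovász condition together with
`|μ_{j+1,j}| ≤ 1/2` gives `(α - 1/4) ‖x*ⱼ‖² ≤ ‖x*ⱼ₊₁‖²`, whence `‖x₁‖² = ‖x*₁‖² ≤ βʲ ‖x*ⱼ₊₁‖²` with
`β = 4/(4α - 1)`. Multiplying these `n` inequalities and using `d(L) = ∏ ‖x*ⱼ‖` (the change of basis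
from the `xⱼ` to the `x*ⱼ` is unitriangular) gives `‖x₁‖^(2n) ≤ β^(n(n-1)/2) d(L)²`.
-/

open Finset InnerProductSpace RealInnerProductSpace

section GramSchmidt

variable {ι E : Type*} [LinearOrder ι] [LocallyFiniteOrderBot ι] [WellFoundedLT ι]
  [NormedAddCommGroup E] [InnerProductSpace ℝ E]

theorem eq_gramSchmidt_of_eq_sub_sum {x y : ι → E}
    (h : ∀ j, y j = x j - ∑ k ∈ Iio j, (⟪x j, y k⟫ / ‖y k‖ ^ 2) • y k) :
    y = gramSchmidt ℝ x := by
  funext j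
  induction j using WellFoundedLT.induction with
  | ind j ih =>
    rw [h j, gramSchmidt_def ℝ x]
    congr 1
    refine Finset.sum_congr rfl fun k hk => ?_
    rw [ih k (Finset.mem_Iio.mp hk), Submodule.starProjection_singleton, real_inner_comm]
    simp

theorem real_inner_gramSchmidt_self (x : ι → E) (j : ι) :
    ⟪gramSchmidt ℝ x j, x j⟫ = ‖gramSchmidt ℝ x j‖ ^ 2 := by
  conv_lhs => rw [gramSchmidt_def'' ℝ x j]
  rw [inner_add_right, real_inner_self_eq_norm_sq, inner_sum, add_eq_left]
  refine Finset.sum_eq_zero fun k hk => ?_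
  rw [real_inner_smul_right, gramSchmidt_orthogonal ℝ x (Finset.mem_Iio.mp hk).ne', mul_zero]

theorem OrthonormalBasis.abs_det_eq_prod_norm_gramSchmidt [Fintype ι] [DecidableEq ι]
    (b : OrthonormalBasis ι ℝ E) (x : ι → E) :
    |b.toBasis.det x| = ∏ j, ‖gramSchmidt ℝ x j‖ := by
  have : FiniteDimensional ℝ E := b.toBasis.finiteDimensional_of_finite
  have hdim : Module.finrank ℝ E = Fintype.card ι := Module.finrank_eq_card_basis b.toBasis
  set g := gramSchmidtOrthonormalBasis hdim x
  have hbg : |b.toBasis.det g| = 1 := by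
    rw [← Real.norm_eq_abs]; exact b.det_to_matrix_orthonormalBasis g
  rw [b.toBasis.det.eq_smul_basis_det g.toBasis, AlternatingMap.smul_apply, smul_eq_mul,
    OrthonormalBasis.coe_toBasis, abs_mul, hbg, one_mul, gramSchmidtOrthonormalBasis_det,
    Finset.abs_prod]
  refine Finset.prod_congr rfl fun j _ => ?_
  by_cases hj : gramSchmidtNormed ℝ x j = 0
  · have hx : gramSchmidt ℝ x j = 0 := by simpa [gramSchmidtNormed] using hj
    rw [inner_gramSchmidtOrthonormalBasis_eq_zero hdim hj, hx, abs_zero, norm_zero]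
  · have hx : gramSchmidt ℝ x j ≠ 0 := fun h0 => hj (by simp [gramSchmidtNormed, h0])
    rw [gramSchmidtOrthonormalBasis_apply hdim hj, gramSchmidtNormed, RCLike.ofReal_real_eq_id,
      id, real_inner_smul_left, real_inner_gramSchmidt_self, abs_of_nonneg (by positivity)]
    field_simp

end GramSchmidt

theorem EuclideanSpace.det_matrixOf_eq_basisFun_det {ι : Type*} [Fintype ι] [DecidableEq ι]
    (x : ι → EuclideanSpace ℝ ι) :
    (Matrix.of fun j i => x j i).det = (EuclideanSpace.basisFun ι ℝ).toBasis.det x := by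
  rw [Module.Basis.det_apply, ← Matrix.det_transpose]
  rfl

theorem norm_sq_le_of_lovasz {E : Type*} [NormedAddCommGroup E] [InnerProductSpace ℝ E]
    {u v : E} {c α : ℝ} (huv : ⟪v, u⟫ = 0) (hc : |c| ≤ 1 / 2) (hα : 1 / 4 < α)
    (h : α * ‖u‖ ^ 2 ≤ ‖v + c • u‖ ^ 2) : ‖u‖ ^ 2 ≤ 4 / (4 * α - 1) * ‖v‖ ^ 2 := by
  have hpyth : ‖v + c • u‖ ^ 2 = ‖v‖ ^ 2 + c ^ 2 * ‖u‖ ^ 2 := by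
    rw [norm_add_sq_real, real_inner_smul_right, huv, norm_smul, mul_pow, Real.norm_eq_abs,
      sq_abs]
    ring
  have hc2 : c ^ 2 ≤ 1 / 4 := by
    rw [← sq_abs]; nlinarith [abs_nonneg c]
  rw [div_mul_eq_mul_div, le_div_iff₀ (by linarith)]
  nlinarith [sq_nonneg ‖u‖]

theorem Fin.le_pow_mul_of_le_mul_succ {n : ℕ} (hn : 0 < n) {f : Fin n → ℝ} {β : ℝ}
    (hβ : 0 ≤ β) (h : ∀ i j : Fin n, (i : ℕ) + 1 = j → f i ≤ β * f j) (j : Fin n) :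
    f ⟨0, hn⟩ ≤ β ^ (j : ℕ) * f j := by
  obtain ⟨m, hm⟩ := j
  induction m with
  | zero => simp
  | succ m ih =>
    calc f ⟨0, hn⟩ ≤ β ^ m * f ⟨m, by omega⟩ := ih _
      _ ≤ β ^ m * (β * f ⟨m + 1, hm⟩) := by gcongr; exact h _ _ rfl
      _ = β ^ (m + 1) * f ⟨m + 1, hm⟩ := by ring

theorem Fin.prod_pow_val {n : ℕ} (β : ℝ) :
    ∏ j : Fin n, β ^ (j : ℕ) = β ^ ((n : ℝ) * (n - 1) / 2) := by
  have hsum : (∑ j : Fin n, (j : ℕ)) * 2 = n * (n - 1) := by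
    rw [Fin.sum_univ_eq_sum_range (fun j => j), Finset.sum_range_id_mul_two]
  rw [Finset.prod_pow_eq_pow_sum, ← Real.rpow_natCast]
  congr 1
  rcases n with _ | n
  · simp
  · rw [Nat.add_sub_cancel] at hsum
    have hsum' : ((∑ j : Fin (n + 1), (j : ℕ) : ℕ) : ℝ) * 2 = ((n + 1) * n : ℕ) := by
      exact_mod_cast hsum
    rw [eq_div_iff two_ne_zero, hsum']
    push_cast
    ring

theorem le_rpow_mul_rpow_of_pow_le {n : ℕ} (hn : 0 < n) {A β D : ℝ} (hβ : 0 ≤ β) (hD : 0 ≤ D)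
    (h : (A ^ 2) ^ n ≤ β ^ ((n : ℝ) * (n - 1) / 2) * D ^ 2) :
    A ≤ β ^ (((n : ℝ) - 1) / 4) * D ^ (1 / (n : ℝ)) := by
  refine le_of_pow_le_pow_left₀ (n := 2 * n) (by omega) (by positivity) ?_
  have hβexp : ((n : ℝ) - 1) / 4 * ((2 * n : ℕ) : ℝ) = n * (n - 1) / 2 := by push_cast; ring
  have hDexp : 1 / (n : ℝ) * ((2 * n : ℕ) : ℝ) = (2 : ℕ) := by
    have : (n : ℝ) ≠ 0 := by positivity
    push_cast; field_simp
  rwa [mul_pow, ← Real.rpow_natCast (β ^ _), ← Real.rpow_natCast (D ^ _), ← Real.rpow_mul hβ,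
    ← Real.rpow_mul hD, hβexp, hDexp, Real.rpow_natCast, pow_mul]

theorem statement7_general (n : ℕ) (hn : 0 < n) (α : ℝ) (hα : 1 / 4 < α)
    (x : Fin n → EuclideanSpace ℝ (Fin n))
    (xstar : Fin n → EuclideanSpace ℝ (Fin n))
    (μ : Fin n → Fin n → ℝ)
    (hμ : ∀ j k : Fin n, μ j k = (inner ℝ (x j) (xstar k) : ℝ) / ‖xstar k‖ ^ 2)
    (hgs : ∀ j : Fin n,
      xstar j = x j - ∑ k ∈ Finset.univ.filter (· < j), μ j k • xstar k)
    (hred1 : ∀ j k : Fin n, k < j → |μ j k| ≤ 1 / 2)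
    (hred2 : ∀ i j : Fin n, (i : ℕ) + 1 = (j : ℕ) →
      α * ‖xstar i‖ ^ 2 ≤ ‖xstar j + μ j i • xstar i‖ ^ 2) :
    ‖x ⟨0, hn⟩‖ ≤ (4 / (4 * α - 1)) ^ (((n : ℝ) - 1) / 4) *
      |(Matrix.of fun j i => x j i).det| ^ (1 / (n : ℝ)) := by
  have hβ : 0 ≤ 4 / (4 * α - 1) := div_nonneg (by norm_num) (by linarith)
  have hx0 : x ⟨0, hn⟩ = xstar ⟨0, hn⟩ := by
    rw [hgs, Finset.sum_eq_zero fun k hk => by simp [Fin.lt_def] at hk, sub_zero]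
  have hxstar : xstar = gramSchmidt ℝ x :=
    eq_gramSchmidt_of_eq_sub_sum fun j => by simp_rw [hgs j, Finset.filter_gt_eq_Iio, hμ]
  have hdet : |(Matrix.of fun j i => x j i).det| = ∏ j, ‖xstar j‖ := by
    rw [EuclideanSpace.det_matrixOf_eq_basisFun_det, hxstar,
      OrthonormalBasis.abs_det_eq_prod_norm_gramSchmidt]
  have hstep : ∀ i j : Fin n, (i : ℕ) + 1 = j →
      ‖xstar i‖ ^ 2 ≤ 4 / (4 * α - 1) * ‖xstar j‖ ^ 2 := fun i j hij =>
    norm_sq_le_of_lovasz (hxstar ▸ gramSchmidt_orthogonal ℝ x (Fin.ne_of_val_ne (by omega)))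
      (hred1 j i (by rw [Fin.lt_def]; omega)) hα (hred2 i j hij)
  refine le_rpow_mul_rpow_of_pow_le hn hβ (abs_nonneg _) ?_
  calc (‖x ⟨0, hn⟩‖ ^ 2) ^ n = ∏ _j : Fin n, ‖xstar ⟨0, hn⟩‖ ^ 2 := by
        rw [hx0, Finset.prod_const, Finset.card_univ, Fintype.card_fin]
    _ ≤ ∏ j : Fin n, (4 / (4 * α - 1)) ^ (j : ℕ) * ‖xstar j‖ ^ 2 :=
        Finset.prod_le_prod (fun _ _ => by positivity) fun j _ =>
          Fin.le_pow_mul_of_le_mul_succ hn hβ hstep j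
    _ = (4 / (4 * α - 1)) ^ ((n : ℝ) * (n - 1) / 2) * |(Matrix.of fun j i => x j i).det| ^ 2 := by
        rw [Finset.prod_mul_distrib, Fin.prod_pow_val, hdet, Finset.prod_pow]

/-- Property (iii) of LLL-reduced bases: if `x₁, …, xₙ` is an α-reduced basis
of ℝⁿ generating a lattice with determinant `d(L) = |det X|` (rows `x j`), then
`‖x₁‖ ≤ (4/(4α-1))^((n-1)/4) · d(L)^(1/n)`. -/
theorem statement7 (n : ℕ) (hn : 0 < n) (α : ℝ) (hα : 1 / 4 < α) (hα1 : α < 1)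
    (x : Fin n → EuclideanSpace ℝ (Fin n))
    (hx_indep : LinearIndependent ℝ x)
    (hx_span : Submodule.span ℝ (Set.range x) = ⊤)
    (xstar : Fin n → EuclideanSpace ℝ (Fin n))
    (μ : Fin n → Fin n → ℝ)
    (hμ : ∀ j k : Fin n, μ j k = (inner ℝ (x j) (xstar k) : ℝ) / ‖xstar k‖ ^ 2)
    (hgs : ∀ j : Fin n,
      xstar j = x j - ∑ k ∈ Finset.univ.filter (· < j), μ j k • xstar k)
    (hred1 : ∀ j k : Fin n, k < j → |μ j k| ≤ 1 / 2)
    (hred2 : ∀ i j : Fin n, (i : ℕ) + 1 = (j : ℕ) →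
      α * ‖xstar i‖ ^ 2 ≤ ‖xstar j + μ j i • xstar i‖ ^ 2) :
    ‖x ⟨0, hn⟩‖ ≤ (4 / (4 * α - 1)) ^ (((n : ℝ) - 1) / 4) *
      |(Matrix.of fun j i => x j i).det| ^ (1 / (n : ℝ)) :=
  statement7_general n hn α hα x xstar μ hμ hgs hred1 hred2
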